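/- Let P, Q be regular ω-posets and ⊒ ⊆ Q × P a ⌅-preserving refiner. Then the map X_⊒ : XP → XQ defined by X_⊒(Y) = (Y^⊑)_⌅ (the set of all elements of Q adjacent to every element of the image of Y under ⊑) is a well-defined continuous map between the clique-spectra. -/

import Mathlib

/-!
`Y^⊑` is a clique because `⊑` preserves `⌅`, and it meets every cap because `⊑` is a refiner
and maximal cliques, being upward closed, meet every cap. In a regular poset, the elements
adjacent to all of an unbounded clique `W` again form a clique, which is therefore the unique
maximal clique containing `W`. For continuity, `q ∉ (Y^⊑)_⌅` is witnessed at a level of `Q`;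
pulling a star-refinement of that level back through `⊑` to a finite level of `P` yields finitely
many elements of `P` whose avoidance by a maximal clique `Y'` forces `q ∉ (Y'^⊑)_⌅`.
-/

namespace OP

section OmegaPoset

variable (P : Type*) [PartialOrder P]

/-- The n-th cone of the poset: `cone 0` is the set of maximal elements. -/
def cone : ℕ → Set P
  | 0 => {p | ∀ q, ¬ p < q}
  | n + 1 => {p | ∀ q, p < q → q ∈ cone n}

/-- The n-th level: atoms (minimal elements) of the n-th cone. -/
def level (n : ℕ) : Set P := {p | p ∈ cone P n ∧ ∀ q, q < p → q ∉ cone P n}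

/-- An ω-poset: all levels finite and every element in some cone. -/
def IsOmegaPoset : Prop := (∀ n, (level P n).Finite) ∧ ∀ p : P, ∃ n, p ∈ cone P n

variable {P}

/-- `refines A C` : every element of `A` lies below some element of `C` (`A ≤ C`). -/
def refines (A C : Set P) : Prop := ∀ a ∈ A, ∃ c ∈ C, a ≤ c

/-- A cap is a subset refined by some level. -/
def IsCap (C : Set P) : Prop := ∃ n, refines (level P n) C

/-- A selector meets every cap. -/
def IsSelector (S : Set P) : Prop := ∀ C : Set P, IsCap C → (S ∩ C).Nonempty

/-- `wedge p q` : `p` and `q` have a common lower bound. -/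
def wedge (p q : P) : Prop := ∃ r, r ≤ p ∧ r ≤ q

def wedgeSet (p : P) : Set P := {q | wedge p q}

/-- The adjacency relation `p ⌅ q`. -/
def barwedge (p q : P) : Prop := ∀ C : Set P, IsCap C → ∃ c ∈ C, wedge p c ∧ wedge c q

/-- `p ⊲_C q`. -/
def starBelowOn (C : Set P) (p q : P) : Prop := ∀ c ∈ C, wedge p c → c ≤ q

/-- The star-below relation `p ⊲ q`. -/
def starBelow (p q : P) : Prop := ∃ n, starBelowOn (level P n) p q

/-- A clique: pairwise adjacent set. -/
def IsClique (X : Set P) : Prop := ∀ p ∈ X, ∀ q ∈ X, barwedge p q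

/-- Unbounded subset: meets `C^≥` for every cap `C`. -/
def IsUnbounded (X : Set P) : Prop := ∀ C : Set P, IsCap C → ∃ u ∈ X, ∃ c ∈ C, u ≤ c

variable (P)

/-- Regularity: every level is eventually star-refined by a later level. -/
def IsRegular : Prop :=
  ∀ m, ∃ n, m < n ∧ ∀ p ∈ level P n, ∃ q ∈ level P m, starBelow p q

/-- The spectrum: minimal selectors. -/
def Spec : Set (Set P) := {S | IsSelector S ∧ ∀ T ⊆ S, IsSelector T → T = S}

def SpecT : Type _ := {S : Set P // S ∈ Spec P}

instance : TopologicalSpace (SpecT P) :=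
  TopologicalSpace.generateFrom {U | ∃ p : P, U = {S : SpecT P | p ∈ S.1}}

/-- The clique-spectrum: unbounded maximal cliques. -/
def CliqueSpec : Set (Set P) :=
  {X | IsUnbounded X ∧ IsClique X ∧ ∀ Y : Set P, IsClique Y → X ⊆ Y → Y = X}

def CliqueSpecT : Type _ := {X : Set P // X ∈ CliqueSpec P}

instance : TopologicalSpace (CliqueSpecT P) :=
  TopologicalSpace.generateFrom {U | ∃ p : P, U = {X : CliqueSpecT P | p ∉ X.1}}

variable {P}

/-- The basic open set `p_S`. -/
def pSOpen (p : P) : Set (SpecT P) := {S | p ∈ S.1}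

/-- The closed set `p̄_S = {S : S ⊆ p^∧}`. -/
def pSBar (p : P) : Set (SpecT P) := {S | S.1 ⊆ wedgeSet p}

/-- Prime ω-poset: every basic open set is nonempty. -/
def IsPrimePoset (P : Type*) [PartialOrder P] : Prop := ∀ p : P, (pSOpen p).Nonempty

end OmegaPoset

end OP

namespace OP

section Refiners

variable {P Q : Type*} [PartialOrder P] [PartialOrder Q]

/-- A refiner: every cap of `Q` is refined through the relation by some cap of `P`. -/
def IsRefinerRel (R : Q → P → Prop) : Prop :=
  ∀ C : Set Q, IsCap C → ∃ B : Set P, IsCap B ∧ ∀ b ∈ B, ∃ c ∈ C, R c b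

/-- `∧`-preserving: `⊐ ∘ ∧ ∘ ⊏ ⊆ ∧`. -/
def WedgePres (R : Q → P → Prop) : Prop :=
  ∀ q p p' q', R q p → wedge p p' → R q' p' → wedge q q'

/-- `⌅`-preserving: `⊐ ∘ ⌅ ∘ ⊏ ⊆ ⌅`. -/
def BarwedgePres (R : Q → P → Prop) : Prop :=
  ∀ q p p' q', R q p → barwedge p p' → R q' p' → barwedge q q'

/-- The star `⊐*` of a relation: `q ⊐* p` iff some cap `C` has `C ∩ p^∧ ⊏ q`. -/
def relStar (R : Q → P → Prop) (q : Q) (p : P) : Prop :=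
  ∃ C : Set P, IsCap C ∧ ∀ c ∈ C, wedge p c → R q c

/-- Composition `▷ ∘ ⊐` with the star-above relation on `Q`. -/
def starAboveComp (R : Q → P → Prop) : Q → P → Prop :=
  fun q p => ∃ q', starBelow q' q ∧ R q' p

/-- A strong refiner: a `∧`-preserving refiner with `⊐ = ▷ * ⊐`. -/
def IsStrongRefiner (R : Q → P → Prop) : Prop :=
  IsRefinerRel R ∧ WedgePres R ∧ ∀ q p, R q p ↔ relStar (starAboveComp R) q p

/-- `φ` is the continuous map associated to `R`, i.e. `φ(S) = S^{⊏ ⊲}`. -/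
def specMapOf (R : Q → P → Prop) (φ : SpecT P → SpecT Q) : Prop :=
  ∀ S : SpecT P, (φ S).1 = {r : Q | ∃ p ∈ S.1, ∃ q, R q p ∧ starBelow q r}

/-- The relation `⊒_φ`: `q ⊒_φ p` iff `q̄_S ⊇ φ[p̄_S]`. -/
def relBarPhi (φ : SpecT P → SpecT Q) (q : Q) (p : P) : Prop :=
  ∀ S : SpecT P, S ∈ pSBar p → φ S ∈ pSBar q

/-- The relation `⊐_φ`: `q ⊐_φ p` iff `q_S ⊇ φ[p̄_S]`. -/
def relPhi (φ : SpecT P → SpecT Q) (q : Q) (p : P) : Prop :=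
  ∀ S : SpecT P, S ∈ pSBar p → φ S ∈ pSOpen q

/-- An arrow: a finite relation with `← ∘ ⌅` co-surjective. -/
def IsArrow (A : Q → P → Prop) : Prop :=
  {x : Q × P | A x.1 x.2}.Finite ∧ ∀ p : P, ∃ q p', A q p' ∧ barwedge p' p

/-- `A ≤ B` for relations: `A ⊆ ≤ ∘ B ∘ ≥`. -/
def arrowLe (A B : Q → P → Prop) : Prop :=
  ∀ q p, A q p → ∃ q' p', q ≤ q' ∧ p ≤ p' ∧ B q' p'

/-- The relation `⟨←` of an arrow: `q ⟨← p` iff `p^{⌅→} ⊲ q`. -/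
def angleRel (A : Q → P → Prop) (q : Q) (p : P) : Prop :=
  ∀ q', (∃ p', barwedge p p' ∧ A q' p') → starBelow q' q

/-- The relation `⋂ₙ (←ₙ)̄_S` on spectra determined by a sequence of arrows. -/
def seqGraph (A : ℕ → Q → P → Prop) (T : SpecT Q) (S : SpecT P) : Prop :=
  ∀ n, ∃ q p, A n q p ∧ T.1 ⊆ wedgeSet q ∧ S.1 ⊆ wedgeSet p

end Refiners

end OP

namespace OP

section Poset

variable {P : Type*} [PartialOrder P]

lemma cone_subset_cone_succ (n : ℕ) : cone P n ⊆ cone P (n + 1) := by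
  induction n with
  | zero => exact fun p hp q hpq => absurd hpq (hp q)
  | succ n ih => exact fun p hp q hpq => ih (hp q hpq)

lemma level_isCap (n : ℕ) : IsCap (level P n) := ⟨n, fun a ha => ⟨a, ha, le_rfl⟩⟩

lemma mem_level_zero {p : P} (hp : p ∈ cone P 0) : p ∈ level P 0 :=
  ⟨hp, fun _ hqp hq => hq p hqp⟩

lemma mem_level_succ {n : ℕ} {p : P} (hp : p ∈ cone P (n + 1)) (hn : p ∉ cone P n) :
    p ∈ level P (n + 1) :=
  ⟨hp, fun _ hqp hq => hn (hq p hqp)⟩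

open Classical in
noncomputable def coneRank (hP : IsOmegaPoset P) (p : P) : ℕ := Nat.find (hP.2 p)

lemma mem_cone_coneRank (hP : IsOmegaPoset P) (p : P) : p ∈ cone P (coneRank hP p) := by
  classical exact Nat.find_spec (hP.2 p)

lemma coneRank_le (hP : IsOmegaPoset P) {p : P} {n : ℕ} (hp : p ∈ cone P n) :
    coneRank hP p ≤ n := by
  classical exact Nat.find_min' _ hp

lemma coneRank_lt_of_lt (hP : IsOmegaPoset P) {p q : P} (hpq : p < q) :
    coneRank hP q < coneRank hP p := by
  have hp := mem_cone_coneRank hP p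
  cases h : coneRank hP p with
  | zero => rw [h] at hp; exact absurd hpq (hp q)
  | succ k => rw [h] at hp; exact Nat.lt_succ_of_le (coneRank_le hP (hp q hpq))

lemma exists_mem_level_le (hP : IsOmegaPoset P) {n : ℕ} {p : P} (hp : p ∈ cone P n) :
    ∃ r ∈ level P n, r ≤ p := by
  obtain ⟨r, ⟨hr, hrp⟩, hmin⟩ := (measure fun q => n - coneRank hP q).wf.has_min
    {q | q ∈ cone P n ∧ q ≤ p} ⟨p, hp, le_rfl⟩
  refine ⟨r, ⟨hr, fun q hqr hq => hmin q ⟨hq, hqr.le.trans hrp⟩ ?_⟩, hrp⟩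
  have := coneRank_lt_of_lt hP hqr
  have := coneRank_le hP hq
  show n - coneRank hP q < n - coneRank hP r
  omega

lemma exists_le_mem_level_succ (hP : IsOmegaPoset P) {n : ℕ} {p : P} (hp : p ∉ cone P n) :
    ∃ r ∈ level P (n + 1), p ≤ r := by
  obtain ⟨r, ⟨hr, hpr⟩, hmin⟩ := (measure (coneRank hP)).wf.has_min
    {q | q ∉ cone P n ∧ p ≤ q} ⟨p, hp, le_rfl⟩
  refine ⟨r, mem_level_succ (fun q hrq => ?_) hr, hpr⟩
  by_contra hq
  exact hmin q ⟨hq, hpr.trans hrq.le⟩ (coneRank_lt_of_lt hP hrq)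

lemma exists_le_mem_level_zero (hP : IsOmegaPoset P) (p : P) : ∃ r ∈ level P 0, p ≤ r := by
  obtain ⟨r, hpr, hmin⟩ := (measure (coneRank hP)).wf.has_min {q | p ≤ q} ⟨p, le_rfl⟩
  exact ⟨r, mem_level_zero fun q hrq =>
    hmin q (le_trans hpr hrq.le) (coneRank_lt_of_lt hP hrq), hpr⟩

lemma wedge.symm {p q : P} (h : wedge p q) : wedge q p :=
  let ⟨r, hrp, hrq⟩ := h; ⟨r, hrq, hrp⟩

lemma wedge.mono_left {p p' q : P} (h : wedge p q) (hp : p ≤ p') : wedge p' q :=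
  let ⟨r, hrp, hrq⟩ := h; ⟨r, hrp.trans hp, hrq⟩

lemma wedge.mono_right {p q q' : P} (h : wedge p q) (hq : q ≤ q') : wedge p q' :=
  let ⟨r, hrp, hrq⟩ := h; ⟨r, hrp, hrq.trans hq⟩

lemma exists_mem_level_wedge (hP : IsOmegaPoset P) (p : P) (n : ℕ) :
    ∃ r ∈ level P n, wedge p r := by
  by_cases hp : p ∈ cone P n
  · obtain ⟨r, hr, hrp⟩ := exists_mem_level_le hP hp
    exact ⟨r, hr, r, hrp, le_rfl⟩
  cases n with
  | zero =>
    obtain ⟨r, hr, hpr⟩ := exists_le_mem_level_zero hP p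
    exact ⟨r, hr, p, le_rfl, hpr⟩
  | succ n =>
    obtain ⟨r, hr, hpr⟩ := exists_le_mem_level_succ hP fun h => hp (cone_subset_cone_succ n h)
    exact ⟨r, hr, p, le_rfl, hpr⟩

lemma IsCap.exists_wedge (hP : IsOmegaPoset P) {C : Set P} (hC : IsCap C) (p : P) :
    ∃ c ∈ C, wedge p c := by
  obtain ⟨n, hn⟩ := hC
  obtain ⟨r, hr, hpr⟩ := exists_mem_level_wedge hP p n
  obtain ⟨c, hc, hrc⟩ := hn r hr
  exact ⟨c, hc, hpr.mono_right hrc⟩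

lemma barwedge_refl (hP : IsOmegaPoset P) (p : P) : barwedge p p := fun _ hC =>
  let ⟨c, hc, hpc⟩ := hC.exists_wedge hP p; ⟨c, hc, hpc, hpc.symm⟩

lemma barwedge.symm {p q : P} (h : barwedge p q) : barwedge q p :=
  fun C hC => let ⟨c, hc, hpc, hcq⟩ := h C hC; ⟨c, hc, hcq.symm, hpc.symm⟩

lemma barwedge.mono_left {p p' q : P} (h : barwedge p q) (hp : p ≤ p') : barwedge p' q :=
  fun C hC => let ⟨c, hc, hpc, hcq⟩ := h C hC; ⟨c, hc, hpc.mono_left hp, hcq⟩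

lemma barwedge.mono_right {p q q' : P} (h : barwedge p q) (hq : q ≤ q') : barwedge p q' :=
  fun C hC => let ⟨c, hc, hpc, hcq⟩ := h C hC; ⟨c, hc, hpc, hcq.mono_right hq⟩

lemma barwedge.wedge_of_starBelow {p q r : P} (h : barwedge p q) (hqr : starBelow q r) :
    wedge p r := by
  obtain ⟨n, hn⟩ := hqr
  obtain ⟨c, hc, hpc, hcq⟩ := h (level P n) (level_isCap n)
  exact hpc.mono_right (hn c hc hcq.symm)

lemma exists_level_not_wedge_of_not_barwedge {p q : P} (h : ¬ barwedge p q) :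
    ∃ n, ∀ c ∈ level P n, wedge p c → ¬ wedge c q := by
  simp only [barwedge, not_forall, not_exists, not_and] at h
  obtain ⟨C, ⟨n, hn⟩, hC⟩ := h
  refine ⟨n, fun c hc hpc hcq => ?_⟩
  obtain ⟨c', hc', hcc'⟩ := hn c hc
  exact hC c' hc' (hpc.mono_right hcc') (hcq.mono_left hcc')

end Poset

section Cliques

variable {P : Type*} [PartialOrder P]

/-- The set `A_⌅`. -/
def adjSet (A : Set P) : Set P := {q | ∀ a ∈ A, barwedge q a}

lemma IsSelector.isUnbounded {S : Set P} (hS : IsSelector S) : IsUnbounded S := fun C hC =>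
  let ⟨u, huS, huC⟩ := hS C hC; ⟨u, huS, u, huC, le_rfl⟩

lemma CliqueSpec.mem_of_le (hP : IsOmegaPoset P) {X : Set P} (hX : X ∈ CliqueSpec P)
    {u b : P} (hu : u ∈ X) (hub : u ≤ b) : b ∈ X := by
  have hclique : IsClique (insert b X) := by
    rintro p (rfl | hp) r (rfl | hr)
    · exact barwedge_refl hP _
    · exact (hX.2.1 u hu r hr).mono_left hub
    · exact (hX.2.1 p hp u hu).mono_right hub
    · exact hX.2.1 p hp r hr
  rw [← hX.2.2 _ hclique (Set.subset_insert b X)]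
  exact Set.mem_insert b X

lemma CliqueSpec.isSelector (hP : IsOmegaPoset P) {X : Set P} (hX : X ∈ CliqueSpec P) :
    IsSelector X := fun C hC =>
  let ⟨_, hu, c, hc, huc⟩ := hX.1 C hC; ⟨c, CliqueSpec.mem_of_le hP hX hu huc, hc⟩

lemma IsClique.subset_adjSet {W : Set P} (hW : IsClique W) : W ⊆ adjSet W :=
  fun p hp r hr => hW p hp r hr

/-- Regularity turns adjacency to a common, arbitrarily fine element `w ∈ W` into a common
element of any given cap wedging both sides. -/
lemma IsUnbounded.isClique_adjSet (hreg : IsRegular P) {W : Set P} (hW : IsUnbounded W) :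
    IsClique (adjSet W) := by
  intro q hq q' hq' C ⟨m, hm⟩
  obtain ⟨n, -, hn⟩ := hreg m
  obtain ⟨w, hw, p, hp, hwp⟩ := hW (level P n) (level_isCap n)
  obtain ⟨s, hs, hps⟩ := hn p hp
  obtain ⟨c, hc, hsc⟩ := hm s hs
  exact ⟨c, hc, (((hq w hw).mono_right hwp).wedge_of_starBelow hps).mono_right hsc,
    ((((hq' w hw).mono_right hwp).wedge_of_starBelow hps).mono_right hsc).symm⟩

lemma adjSet_mem_cliqueSpec (hreg : IsRegular P) {W : Set P} (hWu : IsUnbounded W)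
    (hWc : IsClique W) : adjSet W ∈ CliqueSpec P := by
  refine ⟨fun C hC => ?_, hWu.isClique_adjSet hreg, fun Y hY hsub => ?_⟩
  · obtain ⟨u, hu, hC⟩ := hWu C hC
    exact ⟨u, hWc.subset_adjSet hu, hC⟩
  · exact Set.Subset.antisymm (fun z hz r hr => hY z hz r (hsub (hWc.subset_adjSet hr))) hsub

lemma CliqueSpecT.isOpen_of_forall_finite {U : Set (CliqueSpecT P)}
    (hU : ∀ X ∈ U, ∃ F : Set P, F.Finite ∧ Disjoint F X.1 ∧
      ∀ X' : CliqueSpecT P, Disjoint F X'.1 → X' ∈ U) : IsOpen U := by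
  refine isOpen_iff_forall_mem_open.2 fun X hX => ?_
  obtain ⟨F, hF, hFX, hFU⟩ := hU X hX
  have hopen : IsOpen (⋂ p ∈ F, {X' : CliqueSpecT P | p ∉ X'.1}) :=
    hF.isOpen_biInter fun p _ => TopologicalSpace.isOpen_generateFrom_of_mem ⟨p, rfl⟩
  refine ⟨_, fun X' hX' => hFU X' ?_, hopen, ?_⟩
  · exact Set.disjoint_left.2 fun p hp => Set.mem_iInter₂.1 hX' p hp
  · exact Set.mem_iInter₂.2 fun p hp => Set.disjoint_left.1 hFX hp

end Cliques

section Refiners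

variable {P Q : Type*} [PartialOrder P] [PartialOrder Q]

/-- The set `Y^⊑`. -/
def relPreimage (R : Q → P → Prop) (Y : Set P) : Set Q := {q | ∃ y ∈ Y, R q y}

lemma isClique_relPreimage {R : Q → P → Prop} (hbw : BarwedgePres R) {Y : Set P}
    (hY : IsClique Y) : IsClique (relPreimage R Y) := by
  rintro q ⟨y, hy, hqy⟩ q' ⟨y', hy', hqy'⟩
  exact hbw q y y' q' hqy (hY y hy y' hy') hqy'

lemma isSelector_relPreimage {R : Q → P → Prop} (href : IsRefinerRel R) {Y : Set P}
    (hY : IsSelector Y) : IsSelector (relPreimage R Y) := by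
  intro C hC
  obtain ⟨B, hB, hBC⟩ := href C hC
  obtain ⟨b, hbY, hbB⟩ := hY B hB
  obtain ⟨c, hc, hcb⟩ := hBC b hbB
  exact ⟨c, ⟨b, hbY, hcb⟩, hc⟩

/-- Take a level `n` of `Q` separating `q` from some `r ∈ Y^⊑`, a level `n'` star-refining it,
and a level `m` of `P` below a cap `B` refined into level `n'`. `F` consists of the `b' ∈ level m`
lying under some `b ∈ B` with a refiner in level `n'` still adjacent to `q`: `Y` avoids `F`
because that refiner is adjacent to `r` too, and a maximal clique avoiding `F` meets `level m`
outside `F`. -/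
lemma exists_finite_forall_not_mem_adjSet (hP : IsOmegaPoset P) (hregQ : IsRegular Q)
    {R : Q → P → Prop} (href : IsRefinerRel R) (hbw : BarwedgePres R) {Y : Set P}
    (hY : Y ∈ CliqueSpec P) {q : Q} (hq : q ∉ adjSet (relPreimage R Y)) :
    ∃ F : Set P, F.Finite ∧ Disjoint F Y ∧
      ∀ Y' ∈ CliqueSpec P, Disjoint F Y' → q ∉ adjSet (relPreimage R Y') := by
  simp only [adjSet, Set.mem_ofPred_eq, not_forall, exists_prop] at hq
  obtain ⟨r, ⟨y, hy, hry⟩, hqr⟩ := hq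
  obtain ⟨n, hn⟩ := exists_level_not_wedge_of_not_barwedge hqr
  obtain ⟨n', -, hn'⟩ := hregQ n
  obtain ⟨B, ⟨m, hm⟩, hB⟩ := href (level Q n') (level_isCap n')
  set F := {b' ∈ level P m | ∃ b ∈ B, b' ≤ b ∧ ∃ c ∈ level Q n', R c b ∧ barwedge q c}
  refine ⟨F, (hP.1 m).subset fun _ hb' => hb'.1, ?_, fun Y' hY' hFY' hq' => ?_⟩
  · refine Set.disjoint_left.2 fun b' ⟨_, b, _, hb'b, c, hc, hcb, hqc⟩ hb'Y => ?_
    have hcr : barwedge c r :=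
      hbw c b y r hcb (hY.2.1 b (CliqueSpec.mem_of_le hP hY hb'Y hb'b) y hy) hry
    obtain ⟨s, hs, hcs⟩ := hn' c hc
    exact hn s hs (hqc.wedge_of_starBelow hcs) (hcr.symm.wedge_of_starBelow hcs).symm
  · obtain ⟨b', hb'Y', hb'm⟩ := CliqueSpec.isSelector hP hY' (level P m) (level_isCap m)
    obtain ⟨b, hbB, hb'b⟩ := hm b' hb'm
    obtain ⟨c, hc, hcb⟩ := hB b hbB
    have hcY' : c ∈ relPreimage R Y' := ⟨b, CliqueSpec.mem_of_le hP hY' hb'Y' hb'b, hcb⟩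
    exact Set.disjoint_left.1 hFY' ⟨hb'm, b, hbB, hb'b, c, hc, hcb, hq' c hcY'⟩ hb'Y'

end Refiners

end OP

open OP in
theorem stmt7_general {P Q : Type*} [PartialOrder P] [PartialOrder Q]
    (hP : IsOmegaPoset P) (hregQ : IsRegular Q)
    (R : Q → P → Prop) (href : IsRefinerRel R) (hbw : BarwedgePres R) :
    ∃ f : CliqueSpecT P → CliqueSpecT Q, Continuous f ∧
      ∀ Y : CliqueSpecT P, (f Y).1 = {q : Q | ∀ r : Q, (∃ y ∈ Y.1, R r y) → barwedge q r} := by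
  have hmem (Y : CliqueSpecT P) : adjSet (relPreimage R Y.1) ∈ CliqueSpec Q :=
    adjSet_mem_cliqueSpec hregQ
      (isSelector_relPreimage href (CliqueSpec.isSelector hP Y.2)).isUnbounded
      (isClique_relPreimage hbw Y.2.2.1)
  refine ⟨fun Y => ⟨_, hmem Y⟩, continuous_generateFrom_iff.2 ?_, fun Y => rfl⟩
  rintro _ ⟨q, rfl⟩
  refine CliqueSpecT.isOpen_of_forall_finite fun Y hY => ?_
  obtain ⟨F, hF, hFY, hFY'⟩ :=
    exists_finite_forall_not_mem_adjSet hP hregQ href hbw Y.2 hY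
  exact ⟨F, hF, hFY, fun Y' hY' => hFY' Y'.1 Y'.2 hY'⟩

open OP in
/-- A `⌅`-preserving refiner between regular ω-posets induces a well-defined
continuous map `Y ↦ (Y^⊑)_⌅` between clique-spectra. -/
theorem stmt7 {P Q : Type*} [PartialOrder P] [PartialOrder Q]
    (hP : IsOmegaPoset P) (hregP : IsRegular P) (hQ : IsOmegaPoset Q) (hregQ : IsRegular Q)
    (R : Q → P → Prop) (href : IsRefinerRel R) (hbw : BarwedgePres R) :
    ∃ f : CliqueSpecT P → CliqueSpecT Q, Continuous f ∧
      ∀ Y : CliqueSpecT P, (f Y).1 = {q : Q | ∀ r : Q, (∃ y ∈ Y.1, R r y) → barwedge q r} :=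
  stmt7_general hP hregQ R href hbw
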